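/- Let σ ≥ 2L, x ∈ Q, z ∈ ℝⁿ, and let x⁺ ∈ Q satisfy both ‖∇M_{x,σ}(x⁺) + ψ'(x⁺)‖ ≤ (σ/4)‖x⁺ − x‖² for some ψ'(x⁺) ∈ ∂ψ(x⁺), and M_{x,σ}(x⁺) + ψ(x⁺) ≤ F(x). Suppose ‖g − ∇f(x)‖ ≤ δ_g and ‖B − ∇²f(z)‖ ≤ δ_B for some δ_g, δ_B ≥ 0. Then F(x) − F(x⁺) ≥ (1/(192·σ^{1/2}))·‖∇f(x⁺) + ψ'(x⁺)‖^{3/2} + (σ/48)‖x⁺ − x‖³ − (171/σ²)(δ_B³ + L³‖x − z‖³) − (3/σ^{1/2})·δ_g^{3/2}. -/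

import Mathlib

/-!
Write `h = x⁺ - x`, `r = ‖h‖` and `D = δ_B + L‖x - z‖`, which bounds `‖B - ∇²f(x)‖`. The two
Taylor estimates for a Lipschitz Hessian compare the cubic model with `f`: the decrease condition
gives `F(x) - F(x⁺) ≥ σr³/12 - δ_g r - Dr²/2`, and the near-stationarity of the model gives
`‖∇f(x⁺) + ψ'(x⁺)‖ ≤ δ_g + Dr + σr²`. The claim is a scalar consequence of these two bounds,
obtained from the power-mean inequality and Young's inequality.
-/

open RealInnerProductSpace Set

theorem hasDerivAt_apply_add_smul {E F : Type*} [NormedAddCommGroup E] [NormedSpace ℝ E]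
    [NormedAddCommGroup F] [NormedSpace ℝ F] {G : E → F} (hG : Differentiable ℝ G) (x h : E)
    (t : ℝ) : HasDerivAt (fun s : ℝ => G (x + s • h)) (fderiv ℝ G (x + t • h) h) t := by
  have hline : HasDerivAt (fun s : ℝ => x + s • h) h t := by
    simpa using ((hasDerivAt_id t).smul_const h).const_add x
  exact (hG _).hasFDerivAt.comp_hasDerivAt t hline

theorem norm_sub_sub_fderiv_apply_le {E F : Type*} [NormedAddCommGroup E] [NormedSpace ℝ E]
    [NormedAddCommGroup F] [NormedSpace ℝ F] {G : E → F} (hG : Differentiable ℝ G) {x : E}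
    {L : ℝ} (hLip : ∀ y, ‖fderiv ℝ G y - fderiv ℝ G x‖ ≤ L * ‖y - x‖) (h : E) :
    ‖G (x + h) - G x - fderiv ℝ G x h‖ ≤ L / 2 * ‖h‖ ^ 2 := by
  have hw : ∀ t : ℝ, HasDerivAt (fun s : ℝ => G (x + s • h) - G x - s • fderiv ℝ G x h)
      (fderiv ℝ G (x + t • h) h - fderiv ℝ G x h) t := fun t =>
    ((hasDerivAt_apply_add_smul hG x h t).sub_const _).sub
      (by simpa using (hasDerivAt_id t).smul_const (fderiv ℝ G x h))
  have hB : ∀ t : ℝ, HasDerivAt (fun s : ℝ => L / 2 * ‖h‖ ^ 2 * s ^ 2) (L * ‖h‖ ^ 2 * t) t :=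
    fun t => ((hasDerivAt_pow 2 t).const_mul (L / 2 * ‖h‖ ^ 2)).congr_deriv (by push_cast; ring)
  have bound : ∀ t ∈ Ico (0 : ℝ) 1,
      ‖fderiv ℝ G (x + t • h) h - fderiv ℝ G x h‖ ≤ L * ‖h‖ ^ 2 * t := by
    intro t ht
    calc ‖fderiv ℝ G (x + t • h) h - fderiv ℝ G x h‖
        = ‖(fderiv ℝ G (x + t • h) - fderiv ℝ G x) h‖ := rfl
      _ ≤ L * ‖t • h‖ * ‖h‖ := by
        simpa using (ContinuousLinearMap.le_opNorm _ h).trans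
          (mul_le_mul_of_nonneg_right (hLip (x + t • h)) (norm_nonneg h))
      _ = L * ‖h‖ ^ 2 * t := by rw [norm_smul, Real.norm_of_nonneg ht.1]; ring
  simpa using image_norm_le_of_norm_deriv_right_le_deriv_boundary
    (fun t _ => (hw t).continuousAt.continuousWithinAt) (fun t _ => (hw t).hasDerivWithinAt)
    (by simp) hB bound (right_mem_Icc.2 zero_le_one)

theorem neg_mul_norm_le_inner_of_norm_le {E : Type*} [NormedAddCommGroup E]
    [InnerProductSpace ℝ E] {u v : E} {δ : ℝ} (hu : ‖u‖ ≤ δ) : -(δ * ‖v‖) ≤ ⟪u, v⟫ :=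
  neg_le_of_abs_le ((abs_real_inner_le_norm u v).trans (by gcongr))

section CubicStep

variable {E : Type*} [NormedAddCommGroup E] [InnerProductSpace ℝ E] [CompleteSpace E]
  {f : E → ℝ} {x y g : E} {B : E →L[ℝ] E} {L σ δg D : ℝ}

theorem apply_add_le_of_norm_gradient_sub_le (hf : Differentiable ℝ f) {H : E →L[ℝ] E}
    (hgrad : ∀ h, ‖gradient f (x + h) - gradient f x - H h‖ ≤ L / 2 * ‖h‖ ^ 2) (h : E) :
    f (x + h) ≤ f x + ⟪gradient f x, h⟫ + 1 / 2 * ⟪H h, h⟫ + L / 6 * ‖h‖ ^ 3 := by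
  have hφ : ∀ t : ℝ, HasDerivAt
      (fun s : ℝ => f (x + s • h) - f x - s * ⟪gradient f x, h⟫ - s ^ 2 / 2 * ⟪H h, h⟫)
      (⟪gradient f (x + t • h) - gradient f x - H (t • h), h⟫) t := by
    intro t
    have hline := hasDerivAt_apply_add_smul hf x h t
    rw [(hf _).hasGradientAt.fderiv_apply] at hline
    refine (((hline.sub_const (f x)).sub ((hasDerivAt_id t).mul_const _)).sub
      (((hasDerivAt_pow 2 t).div_const 2).mul_const _)).congr_deriv ?_
    simp only [inner_sub_left, map_smul, real_inner_smul_left]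
    push_cast
    ring
  have hB : ∀ t : ℝ,
      HasDerivAt (fun s : ℝ => L / 6 * ‖h‖ ^ 3 * s ^ 3) (L / 2 * ‖h‖ ^ 3 * t ^ 2) t :=
    fun t => ((hasDerivAt_pow 3 t).const_mul (L / 6 * ‖h‖ ^ 3)).congr_deriv (by push_cast; ring)
  have bound : ∀ t ∈ Ico (0 : ℝ) 1,
      ⟪gradient f (x + t • h) - gradient f x - H (t • h), h⟫ ≤ L / 2 * ‖h‖ ^ 3 * t ^ 2 := by
    intro t ht
    calc _ ≤ ‖gradient f (x + t • h) - gradient f x - H (t • h)‖ * ‖h‖ := real_inner_le_norm _ _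
      _ ≤ L / 2 * ‖t • h‖ ^ 2 * ‖h‖ := by gcongr; exact hgrad _
      _ = L / 2 * ‖h‖ ^ 3 * t ^ 2 := by rw [norm_smul, Real.norm_of_nonneg ht.1]; ring
  have := image_le_of_deriv_right_le_deriv_boundary
    (fun t _ => (hφ t).continuousAt.continuousWithinAt) (fun t _ => (hφ t).hasDerivWithinAt)
    (by simp) (fun t _ => (hB t).continuousAt.continuousWithinAt)
    (fun t _ => (hB t).hasDerivWithinAt) bound (right_mem_Icc.2 zero_le_one)
  simp only [one_smul, one_mul, one_pow] at this
  linarith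

theorem ContDiff.differentiable_gradient (hf : ContDiff ℝ 2 f) :
    Differentiable ℝ (gradient f) :=
  (InnerProductSpace.toDual ℝ E).symm.differentiable.comp
    ((hf.fderiv_right (m := 1) (by norm_num)).differentiable (by norm_num))

theorem norm_gradient_sub_sub_hessian_le (hf : ContDiff ℝ 2 f)
    (hLip : ∀ y, ‖fderiv ℝ (gradient f) y - fderiv ℝ (gradient f) x‖ ≤ L * ‖y - x‖) (h : E) :
    ‖gradient f (x + h) - gradient f x - fderiv ℝ (gradient f) x h‖ ≤ L / 2 * ‖h‖ ^ 2 :=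
  norm_sub_sub_fderiv_apply_le hf.differentiable_gradient hLip h

theorem le_sub_of_cubic_model_decrease {ψ : E → ℝ} (hf : ContDiff ℝ 2 f)
    (hLip : ∀ y, ‖fderiv ℝ (gradient f) y - fderiv ℝ (gradient f) x‖ ≤ L * ‖y - x‖)
    (hσ : 2 * L ≤ σ) (hg : ‖g - gradient f x‖ ≤ δg) (hB : ‖B - fderiv ℝ (gradient f) x‖ ≤ D)
    (hdec : f x + ⟪g, y - x⟫ + 1 / 2 * ⟪B (y - x), y - x⟫ + σ / 6 * ‖y - x‖ ^ 3 + ψ y ≤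
      f x + ψ x) :
    σ / 12 * ‖y - x‖ ^ 3 - δg * ‖y - x‖ - D * ‖y - x‖ ^ 2 / 2 ≤ (f x + ψ x) - (f y + ψ y) := by
  have htaylor := apply_add_le_of_norm_gradient_sub_le (hf.differentiable (by norm_num))
    (norm_gradient_sub_sub_hessian_le hf hLip) (y - x)
  rw [add_sub_cancel] at htaylor
  have hgrad := neg_mul_norm_le_inner_of_norm_le (v := y - x) hg
  have hhess := neg_mul_norm_le_inner_of_norm_le (v := y - x) ((B - _).le_of_opNorm_le hB (y - x))
  rw [inner_sub_left] at hgrad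
  rw [sub_apply, inner_sub_left] at hhess
  have hcube : σ / 12 * ‖y - x‖ ^ 3 ≤ (σ - L) / 6 * ‖y - x‖ ^ 3 :=
    mul_le_mul_of_nonneg_right (by linarith) (by positivity)
  nlinarith

theorem norm_gradient_add_le_of_cubic_model_stationary (hf : ContDiff ℝ 2 f)
    (hLip : ∀ y, ‖fderiv ℝ (gradient f) y - fderiv ℝ (gradient f) x‖ ≤ L * ‖y - x‖)
    (hσ : 2 * L ≤ σ) (hσ0 : 0 ≤ σ) (hg : ‖g - gradient f x‖ ≤ δg)
    (hB : ‖B - fderiv ℝ (gradient f) x‖ ≤ D) {v : E}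
    (hmodel : ‖g + B (y - x) + (σ / 2 * ‖y - x‖) • (y - x) + v‖ ≤ σ / 4 * ‖y - x‖ ^ 2) :
    ‖gradient f y + v‖ ≤ δg + D * ‖y - x‖ + σ * ‖y - x‖ ^ 2 := by
  set H := fderiv ℝ (gradient f) x
  set h := y - x
  have htaylor := norm_gradient_sub_sub_hessian_le hf hLip h
  rw [add_sub_cancel] at htaylor
  have hHB := (H - B).le_of_opNorm_le (norm_sub_rev H B ▸ hB) h
  rw [norm_sub_rev] at hg
  have hreg : ‖(σ / 2 * ‖h‖) • h‖ = σ / 2 * ‖h‖ ^ 2 := by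
    rw [norm_smul, Real.norm_of_nonneg (by positivity)]; ring
  calc ‖gradient f y + v‖
      = ‖(gradient f y - gradient f x - H h) + (gradient f x - g) + (H - B) h
          + (g + B h + (σ / 2 * ‖h‖) • h + v) - (σ / 2 * ‖h‖) • h‖ := by
        congr 1; simp only [sub_apply]; abel
    _ ≤ ‖gradient f y - gradient f x - H h‖ + ‖gradient f x - g‖ + ‖(H - B) h‖
          + ‖g + B h + (σ / 2 * ‖h‖) • h + v‖ + ‖(σ / 2 * ‖h‖) • h‖ :=
        (norm_sub_le _ _).trans (add_le_add_left norm_add₄_le _)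
    _ ≤ L / 2 * ‖h‖ ^ 2 + δg + D * ‖h‖ + σ / 4 * ‖h‖ ^ 2 + σ / 2 * ‖h‖ ^ 2 := by
        rw [hreg]; gcongr
    _ ≤ δg + D * ‖h‖ + σ * ‖h‖ ^ 2 := by nlinarith [sq_nonneg ‖h‖]

end CubicStep

theorem pow_three_le_of_sq_le_sq_add_sq_add_sq {m a b c : ℝ} (hm : 0 ≤ m) (ha : 0 ≤ a)
    (hb : 0 ≤ b) (hc : 0 ≤ c) (h : m ^ 2 ≤ a ^ 2 + b ^ 2 + c ^ 2) :
    m ^ 3 ≤ 3 * (a ^ 3 + b ^ 3 + c ^ 3) := by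
  have hm_le : m ≤ a + b + c := by
    refine (pow_le_pow_iff_left₀ hm (by positivity) two_ne_zero).1 (h.trans ?_)
    nlinarith [mul_nonneg ha hb, mul_nonneg hb hc, mul_nonneg ha hc]
  calc m ^ 3 = m * m ^ 2 := by ring
    _ ≤ (a + b + c) * (a ^ 2 + b ^ 2 + c ^ 2) := mul_le_mul hm_le h (sq_nonneg m) (by positivity)
    _ ≤ 3 * (a ^ 3 + b ^ 3 + c ^ 3) := by
      nlinarith [mul_nonneg (sq_nonneg (a - b)) (add_nonneg ha hb),
        mul_nonneg (sq_nonneg (b - c)) (add_nonneg hb hc),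
        mul_nonneg (sq_nonneg (a - c)) (add_nonneg ha hc)]

theorem sq_rpow_three_halves {m : ℝ} (hm : 0 ≤ m) : (m ^ 2) ^ ((3 : ℝ) / 2) = m ^ 3 := by
  rw [← Real.rpow_natCast m 2, ← Real.rpow_mul hm]
  norm_num

theorem exists_sq_eq_of_nonneg {a : ℝ} (ha : 0 ≤ a) : ∃ b, 0 ≤ b ∧ a = b ^ 2 :=
  ⟨√a, Real.sqrt_nonneg a, (Real.sq_sqrt ha).symm⟩

theorem cubic_step_scalar_bound {σ δg D r N P : ℝ} (hσ : 0 < σ) (hδg : 0 ≤ δg) (hD : 0 ≤ D)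
    (hr : 0 ≤ r) (hN : 0 ≤ N) (hN_le : N ≤ δg + D * r + σ * r ^ 2)
    (hP : σ / 12 * r ^ 3 - δg * r - D * r ^ 2 / 2 ≤ P) :
    1 / (192 * √σ) * N ^ ((3 : ℝ) / 2) + σ / 48 * r ^ 3 - 171 / (4 * σ ^ 2) * D ^ 3
      - 3 / √σ * δg ^ ((3 : ℝ) / 2) ≤ P := by
  -- writing every variable as a square turns all half-integer powers into polynomials
  obtain ⟨s, hs0, rfl⟩ := exists_sq_eq_of_nonneg hσ.le
  obtain ⟨u, hu, rfl⟩ := exists_sq_eq_of_nonneg hδg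
  obtain ⟨d, hd, rfl⟩ := exists_sq_eq_of_nonneg hD
  obtain ⟨ρ, hρ, rfl⟩ := exists_sq_eq_of_nonneg hr
  obtain ⟨m, hm, rfl⟩ := exists_sq_eq_of_nonneg hN
  have hs : 0 < s := lt_of_le_of_ne hs0 (by rintro rfl; simp at hσ)
  rw [Real.sqrt_sq hs0, sq_rpow_three_halves hm, sq_rpow_three_halves hu]
  have hm3 : m ^ 3 ≤ 3 * (u ^ 3 + (d * ρ) ^ 3 + (s * ρ ^ 2) ^ 3) :=
    pow_three_le_of_sq_le_sq_add_sq_add_sq hm hu (mul_nonneg hd hρ) (by positivity)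
      (by linarith)
  -- scaled Young inequalities bounding `δg r`, `D r²` and `(D r)^(3/2)`
  have young₁ : 48 * u ^ 2 * (s * ρ ^ 2) ≤ 128 * u ^ 3 + (s * ρ ^ 2) ^ 3 := by
    nlinarith [mul_nonneg (sq_nonneg (s * ρ ^ 2 - 4 * u)) (by positivity : 0 ≤ s * ρ ^ 2 + 8 * u)]
  have young₂ : 24 * d ^ 2 * (s ^ 2 * ρ ^ 2) ^ 2 ≤ (s ^ 2 * ρ ^ 2) ^ 3 + 2048 * d ^ 6 := by
    nlinarith [mul_nonneg (sq_nonneg (s ^ 2 * ρ ^ 2 - 16 * d ^ 2))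
      (by positivity : 0 ≤ s ^ 2 * ρ ^ 2 + 8 * d ^ 2)]
  have young₃ : 3 * (s * d * ρ) ^ 3 ≤ (s * ρ) ^ 6 + 9 / 4 * d ^ 6 := by
    nlinarith [sq_nonneg ((s * ρ) ^ 3 - 3 / 2 * d ^ 3)]
  have hs3 : 0 ≤ s ^ 3 := by positivity
  field_simp
  nlinarith [mul_le_mul_of_nonneg_left hP (by positivity : (0 : ℝ) ≤ 192 * s ^ 4),
    mul_le_mul_of_nonneg_left hm3 hs3, mul_le_mul_of_nonneg_left young₁ hs3,
    mul_nonneg hs3 (pow_nonneg hu 3), pow_nonneg hd 6]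

theorem stmt_3_general {n : ℕ}
    (f ψ : EuclideanSpace ℝ (Fin n) → ℝ)
    (L : ℝ) (hL : 0 ≤ L)
    (hf : ContDiff ℝ 2 f)
    (hLip : ∀ u v : EuclideanSpace ℝ (Fin n),
      ‖fderiv ℝ (gradient f) v - fderiv ℝ (gradient f) u‖ ≤ L * ‖v - u‖)
    (x : EuclideanSpace ℝ (Fin n)) (z : EuclideanSpace ℝ (Fin n))
    (σ δg δB : ℝ) (hσ : σ ≥ 2 * L) (hσ0 : 0 < σ) (hδg : 0 ≤ δg) (hδB : 0 ≤ δB)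
    (g : EuclideanSpace ℝ (Fin n))
    (B : EuclideanSpace ℝ (Fin n) →L[ℝ] EuclideanSpace ℝ (Fin n))
    (xp : EuclideanSpace ℝ (Fin n))
    (ψp : EuclideanSpace ℝ (Fin n))
    (hmodel : ‖g + B (xp - x) + (σ / 2 * ‖xp - x‖) • (xp - x) + ψp‖ ≤ σ / 4 * ‖xp - x‖ ^ 2)
    (hdec : f x + ⟪g, xp - x⟫ + 1 / 2 * ⟪B (xp - x), xp - x⟫ + σ / 6 * ‖xp - x‖ ^ 3
      + ψ xp ≤ f x + ψ x)
    (hg : ‖g - gradient f x‖ ≤ δg)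
    (hB : ‖B - fderiv ℝ (gradient f) z‖ ≤ δB) :
    (f x + ψ x) - (f xp + ψ xp) ≥
      1 / (192 * Real.sqrt σ) * ‖gradient f xp + ψp‖ ^ ((3 : ℝ) / 2)
        + σ / 48 * ‖xp - x‖ ^ 3
        - 171 / σ ^ 2 * (δB ^ 3 + L ^ 3 * ‖x - z‖ ^ 3)
        - 3 / Real.sqrt σ * δg ^ ((3 : ℝ) / 2) := by
  have hLipx : ∀ y, ‖fderiv ℝ (gradient f) y - fderiv ℝ (gradient f) x‖ ≤ L * ‖y - x‖ :=
    hLip x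
  have hBx : ‖B - fderiv ℝ (gradient f) x‖ ≤ δB + L * ‖x - z‖ := by
    rw [← sub_add_sub_cancel B (fderiv ℝ (gradient f) z), norm_sub_rev x]
    exact norm_add_le_of_le hB (hLip x z)
  have hD : 0 ≤ δB + L * ‖x - z‖ := by positivity
  have hD3 : (δB + L * ‖x - z‖) ^ 3 ≤ 4 * (δB ^ 3 + L ^ 3 * ‖x - z‖ ^ 3) := by
    have := add_pow_le hδB (by positivity : 0 ≤ L * ‖x - z‖) 3
    norm_num [mul_pow] at this
    exact this
  have hbound := cubic_step_scalar_bound hσ0 hδg hD (norm_nonneg _) (norm_nonneg _)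
    (norm_gradient_add_le_of_cubic_model_stationary hf hLipx hσ hσ0.le hg hBx hmodel)
    (le_sub_of_cubic_model_decrease hf hLipx hσ hg hBx hdec)
  have hD3' : 171 / (4 * σ ^ 2) * (δB + L * ‖x - z‖) ^ 3
      ≤ 171 / σ ^ 2 * (δB ^ 3 + L ^ 3 * ‖x - z‖ ^ 3) := by
    calc _ ≤ 171 / (4 * σ ^ 2) * (4 * (δB ^ 3 + L ^ 3 * ‖x - z‖ ^ 3)) := by gcongr
      _ = _ := by field_simp
  linarith

/-- first part of Theorem 1 of the paper: guaranteed functional progress of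
one inexact cubic Newton step, in terms of the new (sub)gradient norm. -/
theorem stmt_3 {n : ℕ} (hn : 1 ≤ n)
    (f ψ : EuclideanSpace ℝ (Fin n) → ℝ) (Q : Set (EuclideanSpace ℝ (Fin n)))
    (L : ℝ) (hL : 0 ≤ L)
    (hf : ContDiff ℝ 2 f)
    (hLip : ∀ u v : EuclideanSpace ℝ (Fin n),
      ‖fderiv ℝ (gradient f) v - fderiv ℝ (gradient f) u‖ ≤ L * ‖v - u‖)
    (hQconv : Convex ℝ Q) (hψ : ConvexOn ℝ Q ψ)
    (x : EuclideanSpace ℝ (Fin n)) (hx : x ∈ Q) (z : EuclideanSpace ℝ (Fin n))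
    (σ δg δB : ℝ) (hσ : σ ≥ 2 * L) (hσ0 : 0 < σ) (hδg : 0 ≤ δg) (hδB : 0 ≤ δB)
    (g : EuclideanSpace ℝ (Fin n))
    (B : EuclideanSpace ℝ (Fin n) →L[ℝ] EuclideanSpace ℝ (Fin n))
    (hBsym : ∀ u v : EuclideanSpace ℝ (Fin n), ⟪B u, v⟫ = ⟪u, B v⟫)
    (xp : EuclideanSpace ℝ (Fin n)) (hxp : xp ∈ Q)
    (ψp : EuclideanSpace ℝ (Fin n))
    (hψp : ∀ y : EuclideanSpace ℝ (Fin n), ψ xp + ⟪ψp, y - xp⟫ ≤ ψ y)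
    (hmodel : ‖g + B (xp - x) + (σ / 2 * ‖xp - x‖) • (xp - x) + ψp‖ ≤ σ / 4 * ‖xp - x‖ ^ 2)
    (hdec : f x + ⟪g, xp - x⟫ + 1 / 2 * ⟪B (xp - x), xp - x⟫ + σ / 6 * ‖xp - x‖ ^ 3
      + ψ xp ≤ f x + ψ x)
    (hg : ‖g - gradient f x‖ ≤ δg)
    (hB : ‖B - fderiv ℝ (gradient f) z‖ ≤ δB) :
    (f x + ψ x) - (f xp + ψ xp) ≥
      1 / (192 * Real.sqrt σ) * ‖gradient f xp + ψp‖ ^ ((3 : ℝ) / 2)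
        + σ / 48 * ‖xp - x‖ ^ 3
        - 171 / σ ^ 2 * (δB ^ 3 + L ^ 3 * ‖x - z‖ ^ 3)
        - 3 / Real.sqrt σ * δg ^ ((3 : ℝ) / 2) :=
  stmt_3_general f ψ L hL hf hLip x z σ δg δB hσ hσ0 hδg hδB g B xp ψp hmodel hdec hg hB
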